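/- arXiv:2112.09923 — 3 statements merged into one kernel-verified Lean document; each statement's English description precedes it below -/
import Mathlib

section
/- Let e = e_0 + e_1 on the vector space V with basis {v_{i,j,k} : (i,j,k) ∈ 𝕀} be the explicit representative described in the context. Then for every p ≥ 0, ker(e^p) is exactly the linear span of the basis vectors v_{i,j,k} satisfying k + Σ_{i' < i} μ_{i',j} ≤ p (where μ_{i',j} = 0 for j > m_{i'}); i.e. ker(e^p) is spanned by the boxes lying in the first p columns of the stacked Young diagram. -/
/-!
In the basis `v`, the operator `e` moves every box of the stacked diagram one column to the
left within its row and kills the boxes of column `0`. Hence `e^p` kills the boxes of the first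
`p` columns and sends every other box to a basis vector, injectively because a box is determined
by its row and its column. For any linear map `T` that kills the basis vectors `b i`, `i ∈ S`, and
maps the others injectively into the basis, `ker T = span (b '' S)`: when `T (b i) = b j`, the
coefficient of `b i` in `u` equals the coefficient of `b j` in `T u`.
-/

/-- A list of naturals is a partition: non-increasing with positive parts. -/
def IsPartitionL (μ : List ℕ) : Prop :=
  μ.Pairwise (· ≥ ·) ∧ ∀ x ∈ μ, 0 < x

/-- A standard tableau of shape `μ` (a partition of `μ.sum`), given as a function on
0-indexed boxes `(r, c)` with `r < μ.length` and `c < μ.getD r 0`: the entries are exactly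
`{1, ..., μ.sum}` each occurring once, strictly increasing along rows and down columns. -/
structure IsStdTableau (μ : List ℕ) (T : ℕ → ℕ → ℕ) : Prop where
  entry_mem : ∀ r c, r < μ.length → c < μ.getD r 0 → 1 ≤ T r c ∧ T r c ≤ μ.sum
  exists_box : ∀ a, 1 ≤ a → a ≤ μ.sum → ∃ r c, r < μ.length ∧ c < μ.getD r 0 ∧ T r c = a
  inj : ∀ r c r' c', r < μ.length → c < μ.getD r 0 → r' < μ.length → c' < μ.getD r' 0 →
      T r c = T r' c' → r = r' ∧ c = c'
  row_lt : ∀ r c c', r < μ.length → c < c' → c' < μ.getD r 0 → T r c < T r c'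
  col_lt : ∀ r r' c, r < r' → r' < μ.length → c < μ.getD r' 0 → T r c < T r' c

/-- `shift μ k = λ_0 + ... + λ_{k-1}` where `λ_l = (μ l).sum`. -/
def shift (μ : ℕ → List ℕ) (k : ℕ) : ℕ := ∑ l ∈ Finset.range k, (μ l).sum

/-- The maximal number of parts among `μ 0, ..., μ (n-1)`. -/
def maxLen (n : ℕ) (μ : ℕ → List ℕ) : ℕ := (Finset.range n).sup fun k => (μ k).length

/-- The pointwise sum partition `μ^Σ`, with `j`-th part `Σ_{i<n} μ_{i,j}`. -/
def sumShape (n : ℕ) (μ : ℕ → List ℕ) : List ℕ :=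
  List.ofFn fun r : Fin (maxLen n μ) => ∑ k ∈ Finset.range n, (μ k).getD (r : ℕ) 0

/-- Row `r` of the stacked filling: the concatenation over `k = 0, ..., n-1` of row `r`
of `T k`, with every entry of the `k`-th row increased by `λ_0 + ... + λ_{k-1}`. -/
def stkRow (n : ℕ) (μ : ℕ → List ℕ) (T : ℕ → ℕ → ℕ → ℕ) (r : ℕ) : List ℕ :=
  ((List.range n).map fun k =>
    (List.range ((μ k).getD r 0)).map fun c => T k r c + shift μ k).flatten

/-- The entry of the stacked filling `stk (T 0, ..., T (n-1))` in box `(r, c)`. -/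
def stkEntry (n : ℕ) (μ : ℕ → List ℕ) (T : ℕ → ℕ → ℕ → ℕ) (r c : ℕ) : ℕ :=
  (stkRow n μ T r).getD c 0

/-- The index set `𝕀`: 0-indexed triples `(i, j, k)` with `i < n`, `j` a row index of the
partition `μ i`, and `k < μ_{i,j}`. -/
def InIdx (n : ℕ) (μ : ℕ → List ℕ) (x : ℕ × ℕ × ℕ) : Prop :=
  x.1 < n ∧ x.2.1 < (μ x.1).length ∧ x.2.2 < (μ x.1).getD x.2.1 0

/-- The explicit representative: `v` restricted to `𝕀` is a basis of `V`, `e0` shifts each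
basis vector one step down its own Jordan chain (within its Young diagram), and `e1` sends
the first vector `v (i,j,0)` of a chain to the last vector `v (i', j, μ_{i',j} - 1)` of the
chain in the same row `j` of the previous diagram `i' < i` having a nonzero `j`-th part
(and to `0` if no such `i'` exists); `e1` kills all other basis vectors. -/
structure IsRep {𝕜 V : Type*} [Field 𝕜] [AddCommGroup V] [Module 𝕜 V]
    (n : ℕ) (μ : ℕ → List ℕ) (v : ℕ × ℕ × ℕ → V) (e0 e1 : V →ₗ[𝕜] V) : Prop where
  indep : LinearIndependent 𝕜 (fun x : {x : ℕ × ℕ × ℕ // InIdx n μ x} => v x)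
  spans : Submodule.span 𝕜 (v '' {x | InIdx n μ x}) = ⊤
  e0_bot : ∀ i j, InIdx n μ (i, j, 0) → e0 (v (i, j, 0)) = 0
  e0_succ : ∀ i j k, InIdx n μ (i, j, k + 1) → e0 (v (i, j, k + 1)) = v (i, j, k)
  e1_pos : ∀ i j k, InIdx n μ (i, j, k + 1) → e1 (v (i, j, k + 1)) = 0
  e1_link : ∀ i i' j, InIdx n μ (i, j, 0) → i' < i → 0 < (μ i').getD j 0 →
      (∀ i'', i' < i'' → i'' < i → (μ i'').getD j 0 = 0) →
      e1 (v (i, j, 0)) = v (i', j, (μ i').getD j 0 - 1)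
  e1_none : ∀ i j, InIdx n μ (i, j, 0) → (∀ i' < i, (μ i').getD j 0 = 0) →
      e1 (v (i, j, 0)) = 0

namespace Module.Basis

variable {ι R M : Type*} [Semiring R] [Nontrivial R] [AddCommMonoid M] [Module R M]

theorem repr_map_apply_of_mapsTo (b : Basis ι R M) (T : M →ₗ[R] M) {S : Set ι}
    (hS : ∀ i ∈ S, T (b i) = 0) (hmaps : ∀ i ∉ S, T (b i) ∈ Set.range b)
    (hinj : Set.InjOn (fun i => T (b i)) Sᶜ)
    {i j : ι} (hi : i ∉ S) (hj : T (b i) = b j) (u : M) :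
    b.repr (T u) j = b.repr u i := by
  suffices (Finsupp.lapply j) ∘ₗ b.repr.toLinearMap ∘ₗ T = Finsupp.lapply i ∘ₗ b.repr by
    exact LinearMap.congr_fun this u
  refine b.ext fun k => ?_
  by_cases hk : k ∈ S
  · have hki : k ≠ i := fun h => hi (h ▸ hk)
    simp [hS k hk, hki]
  · obtain ⟨l, hl⟩ := hmaps k hk
    have hlj : l = j ↔ k = i :=
      ⟨fun h => hinj hk hi (by simp only [← hl, hj, h]),
        fun h => b.injective (by rw [hl, ← hj, h])⟩
    classical
    simp only [LinearMap.comp_apply, ← hl, LinearEquiv.coe_coe, repr_self, Finsupp.lapply_apply]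
    rw [Finsupp.single_apply, Finsupp.single_apply, if_congr hlj rfl rfl]

theorem ker_eq_span_image_of_mapsTo (b : Basis ι R M) (T : M →ₗ[R] M) (S : Set ι)
    (hS : ∀ i ∈ S, T (b i) = 0) (hmaps : ∀ i ∉ S, T (b i) ∈ Set.range b)
    (hinj : Set.InjOn (fun i => T (b i)) Sᶜ) :
    LinearMap.ker T = Submodule.span R (b '' S) := by
  refine le_antisymm (fun u hu => b.mem_span_image.2 fun i hi => ?_) ?_
  · by_contra hiS
    obtain ⟨j, hj⟩ := hmaps i hiS
    rw [Finset.mem_coe, Finsupp.mem_support_iff,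
      ← b.repr_map_apply_of_mapsTo T hS hmaps hinj hiS hj.symm, LinearMap.mem_ker.1 hu] at hi
    exact hi (by simp)
  · rw [Submodule.span_le]
    rintro _ ⟨i, hi, rfl⟩
    exact hS i hi

end Module.Basis

theorem Nat.exists_last_pos_of_sum_range_pos {f : ℕ → ℕ} {n : ℕ}
    (h : 0 < ∑ i ∈ Finset.range n, f i) :
    ∃ m < n, 0 < f m ∧ (∀ l, m < l → l < n → f l = 0) ∧
      ∑ i ∈ Finset.range n, f i = ∑ i ∈ Finset.range m, f i + f m := by
  induction n with
  | zero => simp at h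
  | succ n ih =>
    rw [Finset.sum_range_succ] at h ⊢
    by_cases hfn : f n = 0
    · obtain ⟨m, hmn, hfm, hzero, hsum⟩ := ih (by omega)
      refine ⟨m, by omega, hfm, fun l hml hln => ?_, by rw [hfn, hsum, add_zero]⟩
      rcases Nat.lt_succ_iff_lt_or_eq.1 hln with hln | rfl
      exacts [hzero l hml hln, hfn]
    · exact ⟨n, n.lt_succ_self, Nat.pos_of_ne_zero hfn, fun l hnl hln => by omega, rfl⟩

/-- The 0-indexed column of the box `(i, j, k)` in the diagram obtained by placing the
Young diagrams `μ 0, μ 1, …` next to each other, row by row. -/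
def stackedColumn (μ : ℕ → List ℕ) (x : ℕ × ℕ × ℕ) : ℕ :=
  x.2.2 + ∑ i ∈ Finset.range x.1, (μ i).getD x.2.1 0

theorem stackedColumn_lt_of_lt (μ : ℕ → List ℕ) {i₁ i₂ j k₁ : ℕ}
    (hk₁ : k₁ < (μ i₁).getD j 0) (hi : i₁ < i₂) (k₂ : ℕ) :
    stackedColumn μ (i₁, j, k₁) < stackedColumn μ (i₂, j, k₂) := by
  have hsum : ∑ i ∈ Finset.range (i₁ + 1), (μ i).getD j 0 ≤
      ∑ i ∈ Finset.range i₂, (μ i).getD j 0 :=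
    Finset.sum_le_sum_of_subset (Finset.range_subset_range.2 hi)
  rw [Finset.sum_range_succ] at hsum
  simp only [stackedColumn]
  omega

theorem eq_of_stackedColumn_eq {n : ℕ} {μ : ℕ → List ℕ} {x y : ℕ × ℕ × ℕ}
    (hx : InIdx n μ x) (hy : InIdx n μ y) (hrow : x.2.1 = y.2.1)
    (hcol : stackedColumn μ x = stackedColumn μ y) : x = y := by
  obtain ⟨i₁, j, k₁⟩ := x
  obtain ⟨i₂, j', k₂⟩ := y
  obtain rfl : j = j' := hrow
  rcases lt_trichotomy i₁ i₂ with hi | rfl | hi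
  · exact absurd hcol (stackedColumn_lt_of_lt μ hx.2.2 hi k₂).ne
  · simp only [stackedColumn, Nat.add_right_cancel_iff] at hcol
    rw [hcol]
  · exact absurd hcol (stackedColumn_lt_of_lt μ hy.2.2 hi k₁).ne'

namespace IsRep

variable {𝕜 V : Type*} [Field 𝕜] [AddCommGroup V] [Module 𝕜 V]
  {n : ℕ} {μ : ℕ → List ℕ} {v : ℕ × ℕ × ℕ → V} {e0 e1 : V →ₗ[𝕜] V}

noncomputable def basis (hrep : IsRep n μ v e0 e1) : Module.Basis {x // InIdx n μ x} 𝕜 V :=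
  .mk hrep.indep (le_of_eq (by rw [← hrep.spans, Set.image_eq_range]; rfl))

theorem coe_basis (hrep : IsRep n μ v e0 e1) :
    ⇑hrep.basis = fun x : {x // InIdx n μ x} => v x :=
  Module.Basis.coe_mk _ _

theorem apply_eq_zero_of_stackedColumn_eq_zero (hrep : IsRep n μ v e0 e1)
    {x : ℕ × ℕ × ℕ} (hx : InIdx n μ x) (hcol : stackedColumn μ x = 0) :
    (e0 + e1) (v x) = 0 := by
  obtain ⟨i, j, k⟩ := x
  have hsum : k + ∑ i' ∈ Finset.range i, (μ i').getD j 0 = 0 := hcol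
  obtain rfl : k = 0 := by omega
  have hnone : ∀ i' < i, (μ i').getD j 0 = 0 := fun i' hi' =>
    Finset.sum_eq_zero_iff.1 (Nat.eq_zero_of_add_eq_zero_left hsum) i' (Finset.mem_range.2 hi')
  rw [LinearMap.add_apply, hrep.e0_bot i j hx, hrep.e1_none i j hx hnone, add_zero]

theorem exists_apply_eq_of_stackedColumn_pos (hrep : IsRep n μ v e0 e1)
    {x : ℕ × ℕ × ℕ} (hx : InIdx n μ x) (hcol : 0 < stackedColumn μ x) :
    ∃ y, InIdx n μ y ∧ y.2.1 = x.2.1 ∧ stackedColumn μ y + 1 = stackedColumn μ x ∧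
      (e0 + e1) (v x) = v y := by
  obtain ⟨i, j, k⟩ := x
  obtain ⟨hi, hj, hk⟩ : i < n ∧ j < (μ i).length ∧ k < (μ i).getD j 0 := hx
  cases k with
  | succ k =>
    refine ⟨(i, j, k), ⟨hi, hj, (Nat.lt_succ_self k).trans hk⟩, rfl,
      by simp only [stackedColumn]; omega, ?_⟩
    rw [LinearMap.add_apply, hrep.e0_succ i j k ⟨hi, hj, hk⟩, hrep.e1_pos i j k ⟨hi, hj, hk⟩,
      add_zero]
  | zero =>
    obtain ⟨m, hmi, hm, hzero, hsum⟩ :=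
      Nat.exists_last_pos_of_sum_range_pos (f := fun i' => (μ i').getD j 0) (n := i)
        (by simpa [stackedColumn] using hcol)
    have hjm : j < (μ m).length := by
      by_contra! h
      rw [List.getD_eq_default _ _ h] at hm
      exact hm.false
    refine ⟨(m, j, (μ m).getD j 0 - 1), ⟨hmi.trans hi, hjm, Nat.sub_lt hm one_pos⟩, rfl,
      by simp only [stackedColumn] at hsum ⊢; omega, ?_⟩
    rw [LinearMap.add_apply, hrep.e0_bot i j ⟨hi, hj, hk⟩,
      hrep.e1_link i m j ⟨hi, hj, hk⟩ hmi hm hzero, zero_add]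

theorem exists_pow_apply_eq_of_le (hrep : IsRep n μ v e0 e1) (p : ℕ)
    {x : ℕ × ℕ × ℕ} (hx : InIdx n μ x) (hp : p ≤ stackedColumn μ x) :
    ∃ y, InIdx n μ y ∧ y.2.1 = x.2.1 ∧ stackedColumn μ y + p = stackedColumn μ x ∧
      ((e0 + e1) ^ p) (v x) = v y := by
  induction p generalizing x with
  | zero => exact ⟨x, hx, rfl, rfl, rfl⟩
  | succ p ih =>
    obtain ⟨y, hy, hrow, hcol, hxy⟩ := hrep.exists_apply_eq_of_stackedColumn_pos hx (by omega)
    obtain ⟨z, hz, hrow', hcol', hyz⟩ := ih hy (by omega)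
    refine ⟨z, hz, hrow'.trans hrow, by omega, ?_⟩
    rw [pow_succ, Module.End.mul_apply, hxy, hyz]

theorem pow_apply_eq_zero_of_lt (hrep : IsRep n μ v e0 e1) {p : ℕ}
    {x : ℕ × ℕ × ℕ} (hx : InIdx n μ x) (hp : stackedColumn μ x < p) :
    ((e0 + e1) ^ p) (v x) = 0 := by
  obtain ⟨y, hy, -, hcol, hxy⟩ := hrep.exists_pow_apply_eq_of_le _ hx le_rfl
  obtain ⟨q, rfl⟩ := Nat.exists_eq_add_of_lt hp
  rw [show stackedColumn μ x + q + 1 = q + 1 + stackedColumn μ x by omega, pow_add,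
    Module.End.mul_apply, hxy, pow_succ, Module.End.mul_apply,
    hrep.apply_eq_zero_of_stackedColumn_eq_zero hy (by omega), map_zero]

theorem injOn_pow_apply (hrep : IsRep n μ v e0 e1) (p : ℕ) :
    Set.InjOn (fun x : {x // InIdx n μ x} => ((e0 + e1) ^ p) (v x))
      {x | p ≤ stackedColumn μ x.1} := by
  intro x hx x' hx' hxx'
  obtain ⟨y, hy, hrow, hcol, hxy⟩ := hrep.exists_pow_apply_eq_of_le p x.2 hx
  obtain ⟨y', hy', hrow', hcol', hxy'⟩ := hrep.exists_pow_apply_eq_of_le p x'.2 hx'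
  have hyy' : y = y' := congrArg Subtype.val <|
    hrep.indep.injective (a₁ := ⟨y, hy⟩) (a₂ := ⟨y', hy'⟩) (by simpa [hxy, hxy'] using hxx')
  subst hyy'
  exact Subtype.ext (eq_of_stackedColumn_eq x.2 x'.2 (hrow.symm.trans hrow') (by omega))

end IsRep

theorem representative_kernel_spanned_by_columns_general
    {𝕜 V : Type*} [Field 𝕜] [AddCommGroup V] [Module 𝕜 V]
    (n : ℕ) (μ : ℕ → List ℕ)
    (v : ℕ × ℕ × ℕ → V) (e0 e1 : V →ₗ[𝕜] V) (hrep : IsRep n μ v e0 e1) :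
    ∀ p : ℕ, LinearMap.ker ((e0 + e1) ^ p) =
      Submodule.span 𝕜 (v '' {x | InIdx n μ x ∧
        x.2.2 + ∑ i' ∈ Finset.range x.1, (μ i').getD x.2.1 0 < p}) := by
  intro p
  have himage : hrep.basis '' {x | stackedColumn μ x.1 < p} =
      v '' {x | InIdx n μ x ∧ stackedColumn μ x < p} := by
    ext; simp [hrep.coe_basis, and_comm]
  refine (hrep.basis.ker_eq_span_image_of_mapsTo _ _ (fun x hx => ?_) (fun x hx => ?_) ?_).trans
    (congrArg _ himage)
  · rw [hrep.coe_basis]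
    exact hrep.pow_apply_eq_zero_of_lt x.2 hx
  · obtain ⟨y, hy, -, -, hxy⟩ := hrep.exists_pow_apply_eq_of_le p x.2 (not_lt.1 hx)
    exact ⟨⟨y, hy⟩, by rw [hrep.coe_basis, hxy]⟩
  · rw [hrep.coe_basis]
    exact (hrep.injOn_pow_apply p).mono fun x hx =>
      show p ≤ stackedColumn μ x.1 from not_lt.1 hx

/-- For the explicit representative `e = e0 + e1`, the kernel of `e^p` is
exactly the span of the basis vectors `v (i,j,k)` (0-indexed `k`) with
`(k+1) + Σ_{i' < i} μ_{i',j} ≤ p`, i.e. the span of the boxes in the first `p` columns of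
the stacked Young diagram. -/
theorem representative_kernel_spanned_by_columns
    {𝕜 V : Type*} [Field 𝕜] [AddCommGroup V] [Module 𝕜 V]
    (n : ℕ) (μ : ℕ → List ℕ)
    (hpart : ∀ i < n, IsPartitionL (μ i)) (hcomp : ∀ i < n, 0 < (μ i).sum)
    (v : ℕ × ℕ × ℕ → V) (e0 e1 : V →ₗ[𝕜] V) (hrep : IsRep n μ v e0 e1) :
    ∀ p : ℕ, LinearMap.ker ((e0 + e1) ^ p) =
      Submodule.span 𝕜 (v '' {x | InIdx n μ x ∧
        x.2.2 + ∑ i' ∈ Finset.range x.1, (μ i').getD x.2.1 0 < p}) :=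
  representative_kernel_spanned_by_columns_general n μ v e0 e1 hrep
end

section
/- Let e be a nilpotent endomorphism of an N-dimensional 𝕜-vector space V of Jordan type λ ⊢ N, and let F_• be a full flag of V with e(F_i) ⊆ F_{i-1} for all i ≥ 1. Then there exists a unique standard tableau τ ∈ Std(λ) with Φ(F_•) = τ; in other words, the sequence of Jordan types of the restrictions e|_{F_i} (i = 0,1,...,N) is a nested sequence of partitions obtained at each step by adding a single box, and hence corresponds to a standard tableau of shape λ. -/
/-- The number of entries `a ∈ {1,...,i}` of the tableau `T` of shape `μ` lying in the
first `p` columns (0-indexed columns `c < p`). -/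
noncomputable def entriesInCols (μ : List ℕ) (T : ℕ → ℕ → ℕ) (i p : ℕ) : ℕ :=
  Set.ncard {a : ℕ | 1 ≤ a ∧ a ≤ i ∧
    ∃ r c, r < μ.length ∧ c < μ.getD r 0 ∧ c < p ∧ T r c = a}

section LinearDefs

variable {𝕜 V : Type*} [Field 𝕜] [AddCommGroup V] [Module 𝕜 V]

/-- A full flag `0 = F 0 ⊂ F 1 ⊂ ... ⊂ F N = V` of an `N`-dimensional space. -/
structure IsFullFlag (N : ℕ) (F : ℕ → Submodule 𝕜 V) : Prop where
  mono : Monotone F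
  bot : F 0 = ⊥
  top : F N = ⊤
  dim : ∀ i ≤ N, Module.finrank 𝕜 ↥(F i) = i

/-- A full flag `0 = F 0 ⊂ F 1 ⊂ ... ⊂ F l = U` of an `l`-dimensional subspace `U ⊆ V`. -/
structure IsFlagOf (U : Submodule 𝕜 V) (l : ℕ) (F : ℕ → Submodule 𝕜 V) : Prop where
  mono : Monotone F
  le : ∀ d, F d ≤ U
  bot : F 0 = ⊥
  top : F l = U
  dim : ∀ d ≤ l, Module.finrank 𝕜 ↥(F d) = d

/-- `V = V_0 ⊕ ... ⊕ V_{n-1}` is an internal direct sum decomposition with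
`dim V_k = lam k`. -/
structure IsDecomp (n : ℕ) (lam : ℕ → ℕ) (Vsub : ℕ → Submodule 𝕜 V) : Prop where
  dim : ∀ k < n, Module.finrank 𝕜 ↥(Vsub k) = lam k
  indep : ∀ k < n, Disjoint (Vsub k) (∑ l ∈ (Finset.range n).erase k, Vsub l)
  total : ∑ k ∈ Finset.range n, Vsub k = ⊤

/-- Partial sums `lam 0 + ... + lam (k-1)`. -/
def pSum (lam : ℕ → ℕ) (k : ℕ) : ℕ := ∑ l ∈ Finset.range k, lam l

/-- For `1 ≤ i`, the (0-indexed) index `j` of the block containing position `i`, i.e. the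
largest `j ≤ n` with `lam 0 + ... + lam (j-1) < i`. -/
def LSidx (n : ℕ) (lam : ℕ → ℕ) (i : ℕ) : ℕ :=
  Nat.findGreatest (fun j => pSum lam j < i) n

/-- The Lusztig–Spaltenstein flag: `F̄ i = W_{j-1} + F j d` where `j = LSidx n lam i` is the
block containing position `i`, `W_{j-1} = V_0 + ... + V_{j-1}` and `d = i - (lam 0 + ... + lam (j-1))`. -/
def LSflag (n : ℕ) (lam : ℕ → ℕ) (Vsub : ℕ → Submodule 𝕜 V)
    (F : ℕ → ℕ → Submodule 𝕜 V) (i : ℕ) : Submodule 𝕜 V :=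
  (∑ k ∈ Finset.range (LSidx n lam i), Vsub k) +
    F (LSidx n lam i) (i - pSum lam (LSidx n lam i))

end LinearDefs

/-!
Write `d_i(p) = dim (F_i ∩ ker e^p)`. As `F_k ⊂ F_{k+1}` has codimension one, the increment
`d_{k+1}(p) - d_k(p)` is `0` or `1`, and it is `1` exactly for `p` beyond a threshold `w k`
(nilpotency makes it eventually `1`). So `d_i(p)` counts the letters `< p` among the first `i`
letters of a word `w`, and the number of letters `c` among them is `dim (e^c F_i ∩ ker e)`. This
decreases with `c` because `F_i` is `e`-stable, and for `i = N` it is the length of column `c`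
of `λ` by the Jordan type. Putting the `r`-th occurrence of the letter `c` into box `(r, c)`
therefore gives a standard tableau. Conversely, in a standard tableau the column of each entry
is read off from these counts, and its row is the number of smaller entries in that column, so
the tableau is unique.
-/

open Module

namespace Nat

theorem exists_forall_iff_lt_of_monotone {g : ℕ → Prop} (hg : Monotone g) (h0 : ¬g 0)
    (hex : ∃ p, g p) : ∃ c, ∀ p, g p ↔ c < p := by
  classical
  have hpos : Nat.find hex ≠ 0 := fun h => h0 (h ▸ Nat.find_spec hex)
  refine ⟨Nat.find hex - 1, fun p => ⟨fun hp => ?_, fun hp => hg ?_ (Nat.find_spec hex)⟩⟩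
  · have := Nat.find_min' hex hp
    omega
  · omega

theorem lt_count_iff_of_antitone {P : ℕ → Prop} [DecidablePred P] (hP : Antitone P)
    {r n : ℕ} : r < count P n ↔ r < n ∧ P r := by
  induction n with
  | zero => simp
  | succ n ih =>
    by_cases hn : P n
    · have hall : count P n = n := count_iff_forall.2 fun m hm => hP hm.le hn
      rw [count_succ, if_pos hn, hall]
      exact ⟨fun h => ⟨h, hP (by omega) hn⟩, fun h => h.1⟩
    · rw [count_succ, if_neg hn, add_zero, ih]
      constructor
      · exact fun h => ⟨by omega, h.2⟩
      · rintro ⟨hr, hPr⟩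
        exact ⟨lt_of_le_of_ne (by omega) (fun h => hn (h ▸ hPr)), hPr⟩

theorem nth_mem_of_lt_count {p : ℕ → Prop} [DecidablePred p] {r n : ℕ} (h : r < count p n) :
    p (nth p r) :=
  nth_mem r fun hf => h.trans_le (count_le_card hf n)

theorem count_nth_of_lt_count {p : ℕ → Prop} [DecidablePred p] {r n : ℕ} (h : r < count p n) :
    count p (nth p r) = r :=
  count_nth fun hf => h.trans_le (count_le_card hf n)

theorem nth_lt_nth_of_lt_count {p : ℕ → Prop} [DecidablePred p] {r r' n : ℕ} (hr : r < r')
    (h : r' < count p n) : nth p r < nth p r' :=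
  nth_lt_nth' hr fun hf => h.trans_le (count_le_card hf n)

theorem count_lt_add_one_eq_count_lt_add_count_eq (w : ℕ → ℕ) (c n : ℕ) :
    count (fun k => w k < c + 1) n = count (fun k => w k < c) n + count (fun k => w k = c) n := by
  induction n with
  | zero => simp
  | succ n ih =>
    simp only [count_succ, ih]
    split_ifs <;> omega

theorem eq_of_forall_count_lt_eq {w w' : ℕ → ℕ} {N : ℕ}
    (h : ∀ i ≤ N, ∀ p, count (fun k => w k < p) i = count (fun k => w' k < p) i)
    {k : ℕ} (hk : k < N) : w k = w' k := by
  have hiff : ∀ p, w k < p ↔ w' k < p := fun p => by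
    have hsucc := h (k + 1) hk p
    rw [count_succ, count_succ, h k hk.le p] at hsucc
    constructor <;> intro hp <;> by_contra hp' <;> simp [hp, hp'] at hsucc
  exact le_antisymm (Nat.le_of_lt_succ ((hiff _).2 (Nat.lt_succ_self _)))
    (Nat.le_of_lt_succ ((hiff _).1 (Nat.lt_succ_self _)))

end Nat

theorem Finset.sum_range_min_add_one (f : ℕ → ℕ) (c n : ℕ) :
    ∑ j ∈ range n, min (c + 1) (f j) =
      ∑ j ∈ range n, min c (f j) + Nat.count (fun j => c < f j) n := by
  induction n with
  | zero => simp
  | succ n ih =>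
    rw [sum_range_succ, sum_range_succ, ih, Nat.count_succ]
    split_ifs <;> omega

theorem List.lt_length_of_lt_getD {μ : List ℕ} {r c : ℕ} (h : c < μ.getD r 0) :
    r < μ.length := by
  by_contra hr
  rw [List.getD_eq_default μ 0 (not_lt.1 hr)] at h
  exact Nat.not_lt_zero c h

namespace IsPartitionL

variable {μ : List ℕ}

theorem getD_antitone (hμ : IsPartitionL μ) : Antitone fun j => μ.getD j 0 := by
  intro j j' hjj'
  show μ.getD j' 0 ≤ μ.getD j 0
  rcases eq_or_lt_of_le hjj' with rfl | hlt
  · exact le_rfl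
  by_cases hj' : j' < μ.length
  · rw [List.getD_eq_getElem μ 0 hj', List.getD_eq_getElem μ 0 (hlt.trans hj')]
    simpa using hμ.1.rel_get_of_lt (a := ⟨j, hlt.trans hj'⟩) (b := ⟨j', hj'⟩) hlt
  · rw [List.getD_eq_default μ 0 (not_lt.1 hj')]
    exact Nat.zero_le _

theorem lt_count_iff (hμ : IsPartitionL μ) {r c : ℕ} :
    r < Nat.count (fun j => c < μ.getD j 0) μ.length ↔ c < μ.getD r 0 := by
  rw [Nat.lt_count_iff_of_antitone fun _ _ h hc => hc.trans_le (hμ.getD_antitone h)]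
  exact ⟨And.right, fun h => ⟨List.lt_length_of_lt_getD h, h⟩⟩

end IsPartitionL

/-- The column of `T` holding the entry `k + 1` (positions of the word are `0`-indexed, entries
start at `1`); it is the junk value `sInf ∅ = 0` when there is no such box. -/
noncomputable def colWord (μ : List ℕ) (T : ℕ → ℕ → ℕ) (k : ℕ) : ℕ :=
  sInf {c | ∃ r, r < μ.length ∧ c < μ.getD r 0 ∧ T r c = k + 1}

namespace IsStdTableau

variable {μ : List ℕ} {T : ℕ → ℕ → ℕ}

theorem colWord_eq (hT : IsStdTableau μ T) {r c : ℕ} (hr : r < μ.length) (hc : c < μ.getD r 0) :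
    colWord μ T (T r c - 1) = c := by
  have hpos := (hT.entry_mem r c hr hc).1
  have hset : {c' | ∃ r', r' < μ.length ∧ c' < μ.getD r' 0 ∧ T r' c' = T r c - 1 + 1} = {c} := by
    ext c'
    refine ⟨fun ⟨r', hr', hc', hT'⟩ => (hT.inj r' c' r c hr' hc' hr hc (by omega)).2,
      fun h => ⟨r, hr, h ▸ hc, by rw [h]; omega⟩⟩
  rw [colWord, hset, csInf_singleton]

theorem colWord_of_sum_le (hT : IsStdTableau μ T) {k : ℕ} (hk : μ.sum ≤ k) :
    colWord μ T k = 0 := by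
  have hset : {c | ∃ r, r < μ.length ∧ c < μ.getD r 0 ∧ T r c = k + 1} = ∅ := by
    ext c
    simp only [Set.mem_ofPred_eq, Set.mem_empty_iff_false, iff_false]
    rintro ⟨r, hr, hc, hrc⟩
    have := (hT.entry_mem r c hr hc).2
    omega
  rw [colWord, hset, Nat.sInf_empty]

theorem entriesInCols_eq_count (hT : IsStdTableau μ T) {i : ℕ} (hi : i ≤ μ.sum) (p : ℕ) :
    entriesInCols μ T i p = Nat.count (fun k => colWord μ T k < p) i := by
  have hset : {a : ℕ | 1 ≤ a ∧ a ≤ i ∧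
      ∃ r c, r < μ.length ∧ c < μ.getD r 0 ∧ c < p ∧ T r c = a} =
      (((Finset.range i).filter fun k => colWord μ T k < p).map (addRightEmbedding 1) :
        Set ℕ) := by
    ext a
    simp only [Set.mem_ofPred_eq, Finset.coe_map, Finset.coe_filter, Finset.mem_range,
      Set.mem_image, addRightEmbedding_apply]
    constructor
    · rintro ⟨ha, hai, r, c, hr, hc, hcp, rfl⟩
      exact ⟨T r c - 1, ⟨by omega, by rwa [hT.colWord_eq hr hc]⟩, by omega⟩
    · rintro ⟨k, ⟨hki, hkp⟩, rfl⟩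
      obtain ⟨r, c, hr, hc, hrc⟩ := hT.exists_box (k + 1) (by omega) (by omega)
      have hcol : colWord μ T k = c := by simpa [hrc] using hT.colWord_eq hr hc
      exact ⟨by omega, by omega, r, c, hr, hc, hcol ▸ hkp, hrc⟩
  rw [entriesInCols, hset, Set.ncard_coe_finset, Finset.card_map,
    Nat.count_eq_card_filter_range]

theorem count_colWord_eq (hT : IsStdTableau μ T) (hμ : IsPartitionL μ) {r c : ℕ}
    (hr : r < μ.length) (hc : c < μ.getD r 0) :
    Nat.count (fun k => colWord μ T k = c) (T r c - 1) = r := by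
  have hbox : ∀ r' ≤ r, r' < μ.length ∧ c < μ.getD r' 0 := fun r' h =>
    have hc' := hc.trans_le (hμ.getD_antitone h)
    ⟨List.lt_length_of_lt_getD hc', hc'⟩
  have hset : (Finset.range (T r c - 1)).filter (fun k => colWord μ T k = c) =
      (Finset.range r).image fun r' => T r' c - 1 := by
    ext k
    simp only [Finset.mem_filter, Finset.mem_range, Finset.mem_image]
    constructor
    · rintro ⟨hk, hkc⟩
      obtain ⟨r', c', hr', hc', hrc'⟩ :=
        hT.exists_box (k + 1) (by omega) (by have := (hT.entry_mem r c hr hc).2; omega)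
      have hcc' : c' = c := by simpa [hrc', hkc] using (hT.colWord_eq hr' hc').symm
      subst hcc'
      refine ⟨r', ?_, by omega⟩
      by_contra! hrr'
      rcases eq_or_lt_of_le hrr' with rfl | hlt
      · omega
      · have := hT.col_lt r r' c' hlt hr' hc'
        omega
    · rintro ⟨r', hr', rfl⟩
      obtain ⟨hr'', hc'⟩ := hbox r' hr'.le
      have hlt := hT.col_lt r' r c hr' hr hc
      exact ⟨by have := (hT.entry_mem r' c hr'' hc').1; omega, hT.colWord_eq hr'' hc'⟩
  rw [Nat.count_eq_card_filter_range, hset, Finset.card_image_of_injOn, Finset.card_range]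
  intro r₁ hr₁ r₂ hr₂ h
  obtain ⟨hr₁', hc₁⟩ := hbox r₁ (Finset.mem_range.1 hr₁).le
  obtain ⟨hr₂', hc₂⟩ := hbox r₂ (Finset.mem_range.1 hr₂).le
  have h₁ := (hT.entry_mem r₁ c hr₁' hc₁).1
  have h₂ := (hT.entry_mem r₂ c hr₂' hc₂).1
  exact (hT.inj r₁ c r₂ c hr₁' hc₁ hr₂' hc₂ (by simp only at h; omega)).1

theorem eq_of_colWord_eq {T' : ℕ → ℕ → ℕ} (hT : IsStdTableau μ T) (hT' : IsStdTableau μ T')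
    (hμ : IsPartitionL μ) (hw : colWord μ T = colWord μ T') {r c : ℕ} (hr : r < μ.length)
    (hc : c < μ.getD r 0) : T r c = T' r c := by
  obtain ⟨hpos, hle⟩ := hT.entry_mem r c hr hc
  obtain ⟨r', c', hr', hc', hrc'⟩ := hT'.exists_box (T r c) hpos hle
  have hcc' : c' = c := by
    rw [← hT.colWord_eq hr hc, hw, ← hrc', hT'.colWord_eq hr' hc']
  subst hcc'
  have hrr' : r' = r := by
    rw [← hT.count_colWord_eq hμ hr hc, hw, ← hrc', hT'.count_colWord_eq hμ hr' hc']
  subst hrr'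
  exact hrc'.symm

theorem eq_of_entriesInCols_eq {T' : ℕ → ℕ → ℕ} (hT : IsStdTableau μ T)
    (hT' : IsStdTableau μ T') (hμ : IsPartitionL μ)
    (h : ∀ i ≤ μ.sum, ∀ p, entriesInCols μ T i p = entriesInCols μ T' i p) {r c : ℕ}
    (hr : r < μ.length) (hc : c < μ.getD r 0) : T r c = T' r c := by
  refine hT.eq_of_colWord_eq hT' hμ (funext fun k => ?_) hr hc
  by_cases hk : k < μ.sum
  · refine Nat.eq_of_forall_count_lt_eq (fun i hi p => ?_) hk
    rw [← hT.entriesInCols_eq_count hi, ← hT'.entriesInCols_eq_count hi, h i hi p]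
  · rw [hT.colWord_of_sum_le (not_lt.1 hk), hT'.colWord_of_sum_le (not_lt.1 hk)]

end IsStdTableau

noncomputable def tableauOfWord (w : ℕ → ℕ) (r c : ℕ) : ℕ :=
  Nat.nth (fun k => w k = c) r + 1

theorem tableauOfWord_count (w : ℕ → ℕ) (k : ℕ) :
    tableauOfWord w (Nat.count (fun k' => w k' = w k) k) (w k) = k + 1 := by
  rw [tableauOfWord, Nat.nth_count (p := fun k' => w k' = w k) rfl]

section TableauOfWord

variable {μ : List ℕ} {w : ℕ → ℕ}
  (hlattice : ∀ i ≤ μ.sum, ∀ c,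
    Nat.count (fun k => w k = c + 1) i ≤ Nat.count (fun k => w k = c) i)
  (hshape : ∀ r c, r < Nat.count (fun k => w k = c) μ.sum ↔ c < μ.getD r 0)
include hlattice hshape

theorem isStdTableau_tableauOfWord : IsStdTableau μ (tableauOfWord w) where
  entry_mem r c _ hc := ⟨Nat.le_add_left _ _, Nat.nth_lt_of_lt_count ((hshape r c).2 hc)⟩
  exists_box a ha haN := by
    have hbox := (hshape _ (w (a - 1))).1 (Nat.count_strict_mono rfl (by omega : a - 1 < μ.sum))
    refine ⟨_, _, List.lt_length_of_lt_getD hbox, hbox, ?_⟩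
    rw [tableauOfWord_count]
    omega
  inj r c r' c' _ hc _ hc' h := by
    have hr := (hshape r c).2 hc
    have hr' := (hshape r' c').2 hc'
    have hnth : Nat.nth (fun k => w k = c) r = Nat.nth (fun k => w k = c') r' := by
      simp only [tableauOfWord] at h
      omega
    have hcc' : c = c' := by
      rw [← Nat.nth_mem_of_lt_count hr, hnth, Nat.nth_mem_of_lt_count hr']
    subst hcc'
    exact ⟨by rw [← Nat.count_nth_of_lt_count hr, hnth, Nat.count_nth_of_lt_count hr'], rfl⟩
  row_lt r c c' _ hcc' hc' := by
    have hr' := (hshape r c').2 hc'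
    have hr := (hshape r c).2 (hcc'.trans hc')
    set k' := Nat.nth (fun k => w k = c') r
    have hk' : w k' = c' := Nat.nth_mem_of_lt_count hr'
    have hcount : Nat.count (fun k => w k = c') (k' + 1) = r + 1 := by
      rw [Nat.count_succ, Nat.count_nth_of_lt_count hr', if_pos hk']
    have hlattice' :
        Nat.count (fun k => w k = c') (k' + 1) ≤ Nat.count (fun k => w k = c) (k' + 1) :=
      antitone_nat_of_succ_le (f := fun c => Nat.count (fun k => w k = c) (k' + 1))
        (hlattice (k' + 1) (Nat.nth_lt_of_lt_count hr')) hcc'.le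
    have hlt : Nat.nth (fun k => w k = c) r < k' + 1 := Nat.nth_lt_of_lt_count (by omega)
    have hne : Nat.nth (fun k => w k = c) r ≠ k' := fun h => by
      have := Nat.nth_mem_of_lt_count hr
      rw [h, hk'] at this
      omega
    simp only [tableauOfWord]
    omega
  col_lt r r' c hrr' _ hc := by
    simpa [tableauOfWord] using Nat.nth_lt_nth_of_lt_count hrr' ((hshape r' c).2 hc)

theorem colWord_tableauOfWord {k : ℕ} (hk : k < μ.sum) :
    colWord μ (tableauOfWord w) k = w k := by
  have hbox := (hshape _ (w k)).1 (Nat.count_strict_mono rfl hk)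
  simpa [tableauOfWord_count] using
    (isStdTableau_tableauOfWord hlattice hshape).colWord_eq (List.lt_length_of_lt_getD hbox) hbox

theorem exists_isStdTableau_entriesInCols_eq_count :
    ∃ T, IsStdTableau μ T ∧ ∀ i ≤ μ.sum, ∀ p,
      entriesInCols μ T i p = Nat.count (fun k => w k < p) i := by
  have hT := isStdTableau_tableauOfWord hlattice hshape
  refine ⟨_, hT, fun i hi p => ?_⟩
  rw [hT.entriesInCols_eq_count hi, Nat.count_eq_card_filter_range,
    Nat.count_eq_card_filter_range]
  refine congrArg Finset.card (Finset.filter_congr fun k hk => ?_)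
  rw [colWord_tableauOfWord hlattice hshape ((Finset.mem_range.1 hk).trans_le hi)]

end TableauOfWord

theorem Module.End.ker_pow_le_ker_pow {R M : Type*} [Semiring R] [AddCommMonoid M] [Module R M]
    (f : Module.End R M) {m n : ℕ} (h : m ≤ n) : LinearMap.ker (f ^ m) ≤ LinearMap.ker (f ^ n) :=
  f.iterateKer.monotone h

theorem Submodule.map_pow_succ_le {R M : Type*} [Semiring R] [AddCommMonoid M] [Module R M]
    {f : Module.End R M} {U : Submodule R M} (hU : U.map f ≤ U)
    (c : ℕ) : U.map (f ^ (c + 1)) ≤ U.map (f ^ c) := by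
  rw [pow_succ, Module.End.mul_eq_comp, Submodule.map_comp]
  exact Submodule.map_mono hU

section LinearAlgebra

variable {𝕜 V : Type*} [Field 𝕜] [AddCommGroup V] [Module 𝕜 V] [FiniteDimensional 𝕜 V]

theorem Submodule.finrank_inf_add_finrank_le {A B : Submodule 𝕜 V} (hAB : A ≤ B)
    (K : Submodule 𝕜 V) :
    finrank 𝕜 ↥(B ⊓ K) + finrank 𝕜 A ≤ finrank 𝕜 ↥(A ⊓ K) + finrank 𝕜 B := by
  have hmod := Submodule.finrank_sup_add_finrank_inf_eq (B ⊓ K) A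
  rw [inf_right_comm, inf_eq_right.2 hAB] at hmod
  have := Submodule.finrank_mono (sup_le inf_le_left hAB : B ⊓ K ⊔ A ≤ B)
  omega

open Classical in
theorem Submodule.finrank_inf_eq_add_ite {A B : Submodule 𝕜 V} (hAB : A ≤ B)
    (hB : finrank 𝕜 B = finrank 𝕜 A + 1) (K : Submodule 𝕜 V) :
    finrank 𝕜 ↥(B ⊓ K) = finrank 𝕜 ↥(A ⊓ K) + if B ⊓ K ≤ A then 0 else 1 := by
  have hle := Submodule.finrank_inf_add_finrank_le hAB K
  split_ifs with h
  · rw [le_antisymm (le_inf h inf_le_right) (inf_le_inf_right K hAB), add_zero]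
  · have hlt : A ⊓ K < B ⊓ K :=
      lt_of_le_not_ge (inf_le_inf_right K hAB) fun h' => h (h'.trans inf_le_left)
    have := Submodule.finrank_lt_finrank_of_lt hlt
    omega

theorem Submodule.finrank_map_add_finrank_inf_ker {W : Type*} [AddCommGroup W] [Module 𝕜 W]
    (f : V →ₗ[𝕜] W) (S : Submodule 𝕜 V) :
    finrank 𝕜 ↥(S.map f) + finrank 𝕜 ↥(S ⊓ LinearMap.ker f) = finrank 𝕜 S := by
  rw [← (f.domRestrict S).finrank_range_add_finrank_ker, LinearMap.range_domRestrict,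
    LinearMap.ker_domRestrict, ← Submodule.finrank_map_subtype_eq S, Submodule.map_comap_subtype]

theorem finrank_inf_ker_pow_succ (f : Module.End 𝕜 V) (U : Submodule 𝕜 V) (p : ℕ) :
    finrank 𝕜 ↥(U ⊓ LinearMap.ker (f ^ (p + 1))) =
      finrank 𝕜 ↥(U ⊓ LinearMap.ker (f ^ p)) + finrank 𝕜 ↥(U.map (f ^ p) ⊓ LinearMap.ker f) := by
  have hpow : ∀ x, (f ^ (p + 1)) x = f ((f ^ p) x) := fun x => by
    rw [pow_succ', Module.End.mul_apply]
  have hmap :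
      (U ⊓ LinearMap.ker (f ^ (p + 1))).map (f ^ p) = U.map (f ^ p) ⊓ LinearMap.ker f := by
    ext y
    simp only [Submodule.mem_map, Submodule.mem_inf, LinearMap.mem_ker]
    constructor
    · rintro ⟨x, ⟨hxU, hx⟩, rfl⟩
      exact ⟨⟨x, hxU, rfl⟩, by rw [← hpow, hx]⟩
    · rintro ⟨⟨x, hxU, rfl⟩, hy⟩
      exact ⟨x, ⟨hxU, by rw [hpow, hy]⟩, rfl⟩
  have hker : U ⊓ LinearMap.ker (f ^ (p + 1)) ⊓ LinearMap.ker (f ^ p) =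
      U ⊓ LinearMap.ker (f ^ p) := by
    rw [inf_assoc, inf_eq_right.2 (f.ker_pow_le_ker_pow p.le_succ)]
  rw [← Submodule.finrank_map_add_finrank_inf_ker (f ^ p), hmap, hker, add_comm]

theorem count_eq_finrank_map_pow_inf_ker {f : Module.End 𝕜 V} {U : Submodule 𝕜 V} {w : ℕ → ℕ}
    {i : ℕ} (hw : ∀ p, finrank 𝕜 ↥(U ⊓ LinearMap.ker (f ^ p)) = Nat.count (fun k => w k < p) i)
    (c : ℕ) : Nat.count (fun k => w k = c) i = finrank 𝕜 ↥(U.map (f ^ c) ⊓ LinearMap.ker f) := by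
  have := finrank_inf_ker_pow_succ f U c
  rw [hw, hw, Nat.count_lt_add_one_eq_count_lt_add_count_eq] at this
  omega

namespace IsFullFlag

variable {N : ℕ} {F : ℕ → Submodule 𝕜 V}

theorem exists_forall_not_inf_ker_pow_le_iff (hF : IsFullFlag N F) {e : Module.End 𝕜 V}
    (he : IsNilpotent e) {k : ℕ} (hk : k < N) :
    ∃ c, ∀ p, ¬F (k + 1) ⊓ LinearMap.ker (e ^ p) ≤ F k ↔ c < p := by
  obtain ⟨n, hn⟩ := he
  refine Nat.exists_forall_iff_lt_of_monotone
    (fun p q hpq hp hq => hp ((inf_le_inf_left _ (e.ker_pow_le_ker_pow hpq)).trans hq))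
    (by simp [Module.End.one_eq_id]) ⟨n, fun h => ?_⟩
  rw [hn, LinearMap.ker_zero, inf_top_eq] at h
  have := Submodule.finrank_mono h
  rw [hF.dim _ hk, hF.dim _ hk.le] at this
  omega

theorem exists_finrank_inf_ker_pow_eq_count (hF : IsFullFlag N F) {e : Module.End 𝕜 V}
    (he : IsNilpotent e) : ∃ w : ℕ → ℕ, ∀ i ≤ N, ∀ p,
      finrank 𝕜 ↥(F i ⊓ LinearMap.ker (e ^ p)) = Nat.count (fun k => w k < p) i := by
  have hjump : ∀ k, ∃ c, k < N → ∀ p, ¬F (k + 1) ⊓ LinearMap.ker (e ^ p) ≤ F k ↔ c < p :=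
    fun k => if hk : k < N then (hF.exists_forall_not_inf_ker_pow_le_iff he hk).imp fun _ h _ => h
      else ⟨0, fun h => absurd h hk⟩
  choose w hw using hjump
  refine ⟨w, fun i => ?_⟩
  induction i with
  | zero => simp [hF.bot]
  | succ k ih =>
    intro hk p
    have hdim : finrank 𝕜 ↥(F (k + 1)) = finrank 𝕜 ↥(F k) + 1 := by
      rw [hF.dim _ hk, hF.dim _ (by omega)]
    rw [Submodule.finrank_inf_eq_add_ite (hF.mono k.le_succ) hdim, ih (by omega),
      Nat.count_succ]
    by_cases hp : w k < p
    · rw [if_neg ((hw k (by omega) p).2 hp), if_pos hp]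
    · rw [if_pos (not_not.1 (mt (hw k (by omega) p).1 hp)), if_neg hp]

end IsFullFlag

end LinearAlgebra

theorem spaltenstein_invariant_exists_unique_general
    {𝕜 V : Type*} [Field 𝕜] [AddCommGroup V] [Module 𝕜 V] [FiniteDimensional 𝕜 V]
    (N : ℕ) (lam : List ℕ) (hlam : IsPartitionL lam) (hsum : lam.sum = N)
    (e : V →ₗ[𝕜] V) (henil : IsNilpotent e)
    (htype : ∀ p : ℕ, Module.finrank 𝕜 ↥(LinearMap.ker (e ^ p)) =
      ∑ j ∈ Finset.range lam.length, min p (lam.getD j 0))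
    (F : ℕ → Submodule 𝕜 V) (hF : IsFullFlag N F)
    (hspringer : ∀ i, Submodule.map e (F (i + 1)) ≤ F i) :
    (∃ τ : ℕ → ℕ → ℕ, IsStdTableau lam τ ∧ ∀ i ≤ N, ∀ p : ℕ,
      Module.finrank 𝕜 ↥(F i ⊓ LinearMap.ker (e ^ p)) = entriesInCols lam τ i p) ∧
    (∀ τ τ' : ℕ → ℕ → ℕ, IsStdTableau lam τ → IsStdTableau lam τ' →
      (∀ i ≤ N, ∀ p : ℕ,
        Module.finrank 𝕜 ↥(F i ⊓ LinearMap.ker (e ^ p)) = entriesInCols lam τ i p) →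
      (∀ i ≤ N, ∀ p : ℕ,
        Module.finrank 𝕜 ↥(F i ⊓ LinearMap.ker (e ^ p)) = entriesInCols lam τ' i p) →
      ∀ r c, r < lam.length → c < lam.getD r 0 → τ r c = τ' r c) := by
  subst hsum
  obtain ⟨w, hw⟩ := hF.exists_finrank_inf_ker_pow_eq_count henil
  have hstable : ∀ i, (F i).map e ≤ F i
    | 0 => by rw [hF.bot, Submodule.map_bot]
    | i + 1 => (hspringer i).trans (hF.mono i.le_succ)
  have hlattice : ∀ i ≤ lam.sum, ∀ c,
      Nat.count (fun k => w k = c + 1) i ≤ Nat.count (fun k => w k = c) i := fun i hi c => by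
    rw [count_eq_finrank_map_pow_inf_ker (hw i hi), count_eq_finrank_map_pow_inf_ker (hw i hi)]
    exact Submodule.finrank_mono (inf_le_inf_right _ (Submodule.map_pow_succ_le (hstable i) c))
  have hker : ∀ p, Nat.count (fun k => w k < p) lam.sum =
      ∑ j ∈ Finset.range lam.length, min p (lam.getD j 0) := fun p => by
    rw [← htype, ← hw _ le_rfl, hF.top, top_inf_eq]
  have hshape : ∀ r c, r < Nat.count (fun k => w k = c) lam.sum ↔ c < lam.getD r 0 := by
    intro r c
    have hdiff := Finset.sum_range_min_add_one (fun j => lam.getD j 0) c lam.length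
    rw [← hker, ← hker, Nat.count_lt_add_one_eq_count_lt_add_count_eq] at hdiff
    rw [← hlam.lt_count_iff, Nat.add_left_cancel hdiff]
  obtain ⟨τ, hτ, hτw⟩ := exists_isStdTableau_entriesInCols_eq_count hlattice hshape
  refine ⟨⟨τ, hτ, fun i hi p => by rw [hw i hi, hτw i hi]⟩,
    fun τ τ' hτ hτ' h h' r c hr hc => hτ.eq_of_entriesInCols_eq hτ' hlam ?_ hr hc⟩
  exact fun i hi p => by rw [← h i hi, h' i hi]

/-- For a nilpotent `e` of Jordan type `λ ⊢ N` and a full flag `F` in the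
Springer fibre of `e`, there is a unique standard tableau `τ ∈ Std(λ)` with `Φ(F) = τ`:
for all `i ≤ N` and `p`, `dim ker((e|_{F i})^p)` is the number of entries `a ∈ {1,...,i}`
in the first `p` columns of `τ`. -/
theorem spaltenstein_invariant_exists_unique
    {𝕜 V : Type*} [Field 𝕜] [AddCommGroup V] [Module 𝕜 V] [FiniteDimensional 𝕜 V]
    (N : ℕ) (lam : List ℕ) (hlam : IsPartitionL lam) (hsum : lam.sum = N)
    (hdim : Module.finrank 𝕜 V = N)
    (e : V →ₗ[𝕜] V) (henil : IsNilpotent e)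
    (htype : ∀ p : ℕ, Module.finrank 𝕜 ↥(LinearMap.ker (e ^ p)) =
      ∑ j ∈ Finset.range lam.length, min p (lam.getD j 0))
    (F : ℕ → Submodule 𝕜 V) (hF : IsFullFlag N F)
    (hspringer : ∀ i, Submodule.map e (F (i + 1)) ≤ F i) :
    (∃ τ : ℕ → ℕ → ℕ, IsStdTableau lam τ ∧ ∀ i ≤ N, ∀ p : ℕ,
      Module.finrank 𝕜 ↥(F i ⊓ LinearMap.ker (e ^ p)) = entriesInCols lam τ i p) ∧
    (∀ τ τ' : ℕ → ℕ → ℕ, IsStdTableau lam τ → IsStdTableau lam τ' →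
      (∀ i ≤ N, ∀ p : ℕ,
        Module.finrank 𝕜 ↥(F i ⊓ LinearMap.ker (e ^ p)) = entriesInCols lam τ i p) →
      (∀ i ≤ N, ∀ p : ℕ,
        Module.finrank 𝕜 ↥(F i ⊓ LinearMap.ker (e ^ p)) = entriesInCols lam τ' i p) →
      ∀ r c, r < lam.length → c < lam.getD r 0 → τ r c = τ' r c) :=
  spaltenstein_invariant_exists_unique_general N lam hlam hsum e henil htype F hF hspringer
end

section
/- Let 𝕜, V = V_1 ⊕ ... ⊕ V_n and W_j be as in the context. The Lusztig–Spaltenstein map on flags is injective, and each input flag can be recovered from the output: if F^{(k)}_• are full flags of V_k and F̄_• = LS(F^{(1)}_•,...,F^{(n)}_•), then for every j ∈ {1,...,n} and every d ∈ {0,...,λ_j}, F^{(j)}_d = F̄_i ∩ V_j where i = λ_1 + ... + λ_{j-1} + d. Consequently, if LS(F^{(1)}_•,...,F^{(n)}_•) = LS(G^{(1)}_•,...,G^{(n)}_•) as flags of V, then F^{(k)}_• = G^{(k)}_• for every k. -/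
/-!
With `W_j = ∑ k < j, V_k`, at a position `pSum lam j + d` with `0 < d` the flag is `W_j + F j d`;
since `F j d ≤ V_j` and `W_j ⊓ V_j = ⊥`, the modular law gives `(W_j + F j d) ⊓ V_j = F j d`.
At a block boundary `pSum lam j` the flag is contained in `W_j`, so its intersection with `V_j` is
`⊥ = F j 0`. Injectivity follows because both input flags are recovered from the same output.
-/

section LusztigSpaltenstein

variable {𝕜 V : Type*} [Field 𝕜] [AddCommGroup V] [Module 𝕜 V]
  {n : ℕ} {lam : ℕ → ℕ} {Vsub : ℕ → Submodule 𝕜 V} {F : ℕ → ℕ → Submodule 𝕜 V}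

lemma pSum_mono (lam : ℕ → ℕ) : Monotone (pSum lam) := fun _ _ hab =>
  Finset.sum_le_sum_of_subset (Finset.range_subset_range.2 hab)

lemma LSidx_pSum_add {j d : ℕ} (hj : j ≤ n) (hd₀ : 0 < d) (hd : d ≤ lam j) :
    LSidx n lam (pSum lam j + d) = j := by
  rw [LSidx, Nat.findGreatest_eq_iff]
  refine ⟨hj, fun _ => by omega, fun m hjm _ hlt => ?_⟩
  have hle := pSum_mono lam (Nat.succ_le_of_lt hjm)
  rw [pSum, Finset.sum_range_succ, ← pSum] at hle
  omega

lemma LSidx_pSum_lt {j : ℕ} (hj : 0 < pSum lam j) : LSidx n lam (pSum lam j) < j :=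
  (pSum_mono lam).reflect_lt <|
    Nat.findGreatest_spec (P := fun k => pSum lam k < pSum lam j) (Nat.zero_le n)
      (by simpa [pSum] using hj)

lemma LSflag_zero : LSflag n lam Vsub F 0 = F 0 0 := by
  have hidx : LSidx n lam 0 = 0 := Nat.findGreatest_eq_zero_iff.2 fun _ _ _ => Nat.not_lt_zero _
  simp [LSflag, hidx]

lemma IsDecomp.disjoint_sum_range (hdecomp : IsDecomp n lam Vsub) {j : ℕ} (hj : j < n) :
    Disjoint (∑ k ∈ Finset.range j, Vsub k) (Vsub j) :=
  ((hdecomp.indep j hj).mono_right <| Finset.sum_le_sum_of_subset fun k hk => by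
    simp only [Finset.mem_range, Finset.mem_erase] at hk ⊢
    omega).symm

lemma LSflag_pSum_le (hF : ∀ k < n, IsFlagOf (Vsub k) (lam k) (F k)) {j : ℕ} (hj : j < n) :
    LSflag n lam Vsub F (pSum lam j) ≤ ∑ k ∈ Finset.range j, Vsub k := by
  rcases Nat.eq_zero_or_pos (pSum lam j) with hzero | hpos
  · rw [hzero, LSflag_zero, (hF 0 (by omega)).bot]
    exact bot_le
  · have hp := LSidx_pSum_lt (n := n) hpos
    rw [LSflag, Submodule.add_eq_sup]
    exact sup_le (Finset.sum_le_sum_of_subset (Finset.range_subset_range.2 hp.le))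
      (((hF _ (hp.trans hj)).le _).trans
        (Finset.single_le_sum (fun _ _ => bot_le) (Finset.mem_range.2 hp)))

lemma LSflag_pSum_add_inf (hdecomp : IsDecomp n lam Vsub)
    (hF : ∀ k < n, IsFlagOf (Vsub k) (lam k) (F k)) {j d : ℕ} (hj : j < n) (hd : d ≤ lam j) :
    LSflag n lam Vsub F (pSum lam j + d) ⊓ Vsub j = F j d := by
  rcases Nat.eq_zero_or_pos d with rfl | hd₀
  · rw [add_zero, (hF j hj).bot]
    exact ((hdecomp.disjoint_sum_range hj).mono_left (LSflag_pSum_le hF hj)).eq_bot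
  · rw [LSflag, LSidx_pSum_add hj.le hd₀ hd, Nat.add_sub_cancel_left, Submodule.add_eq_sup,
      sup_comm, sup_inf_assoc_of_le _ ((hF j hj).le d), (hdecomp.disjoint_sum_range hj).eq_bot,
      sup_bot_eq]

end LusztigSpaltenstein

theorem LSflag_injective_general
    {𝕜 V : Type*} [Field 𝕜] [AddCommGroup V] [Module 𝕜 V]
    (n : ℕ) (lam : ℕ → ℕ)
    (Vsub : ℕ → Submodule 𝕜 V) (hdecomp : IsDecomp n lam Vsub)
    (F : ℕ → ℕ → Submodule 𝕜 V) (hF : ∀ k < n, IsFlagOf (Vsub k) (lam k) (F k)) :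
    (∀ j < n, ∀ d ≤ lam j,
      F j d = LSflag n lam Vsub F (pSum lam j + d) ⊓ Vsub j) ∧
    (∀ G : ℕ → ℕ → Submodule 𝕜 V, (∀ k < n, IsFlagOf (Vsub k) (lam k) (G k)) →
      (∀ i, LSflag n lam Vsub F i = LSflag n lam Vsub G i) →
      ∀ k < n, ∀ d ≤ lam k, F k d = G k d) := by
  refine ⟨fun j hj d hd => (LSflag_pSum_add_inf hdecomp hF hj hd).symm,
    fun G hG hFG k hk d hd => ?_⟩
  rw [← LSflag_pSum_add_inf hdecomp hF hk hd, hFG, LSflag_pSum_add_inf hdecomp hG hk hd]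

/-- The Lusztig–Spaltenstein map on flags is injective and each input flag
is recovered from the output: `F j d = (LS F) (λ_0 + ... + λ_{j-1} + d) ⊓ V_j`; consequently
if `LS F = LS G` then `F k = G k` for every `k`. -/
theorem LSflag_injective
    {𝕜 V : Type*} [Field 𝕜] [AddCommGroup V] [Module 𝕜 V] [FiniteDimensional 𝕜 V]
    (n : ℕ) (lam : ℕ → ℕ) (hlam : ∀ k < n, 0 < lam k)
    (hdim : Module.finrank 𝕜 V = ∑ k ∈ Finset.range n, lam k)
    (Vsub : ℕ → Submodule 𝕜 V) (hdecomp : IsDecomp n lam Vsub)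
    (F : ℕ → ℕ → Submodule 𝕜 V) (hF : ∀ k < n, IsFlagOf (Vsub k) (lam k) (F k)) :
    (∀ j < n, ∀ d ≤ lam j,
      F j d = LSflag n lam Vsub F (pSum lam j + d) ⊓ Vsub j) ∧
    (∀ G : ℕ → ℕ → Submodule 𝕜 V, (∀ k < n, IsFlagOf (Vsub k) (lam k) (G k)) →
      (∀ i, LSflag n lam Vsub F i = LSflag n lam Vsub G i) →
      ∀ k < n, ∀ d ≤ lam k, F k d = G k d) :=
  LSflag_injective_general n lam Vsub hdecomp F hF
end
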